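/- Under the assumption that n sample points in ℝ^d (n ≥ d+1) are in general position, the maximal sample Tukey depth is at most ⌈n/2⌉/n. -/

import Mathlib

/-!
Choose a direction `u` that is not orthogonal to any `xᵢ - y` with `xᵢ ≠ y`. The closed
halfspaces through `y` with inner normals `u` and `-u` cover the sample and share only the sample
points equal to `y`, of which there is at most one because general position makes the sample
points distinct. So their masses add up to at most `n + 1`, and the smaller one is at most
`⌈n/2⌉`.
-/

open scoped RealInnerProductSpace

def IsClosedHalfspace {d : ℕ} (H : Set (EuclideanSpace ℝ (Fin d))) : Prop :=
  ∃ (u : EuclideanSpace ℝ (Fin d)) (c : ℝ), u ≠ 0 ∧ H = {y | c ≤ ⟪u, y⟫}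

open Finset Module

section InnerProductSpace

variable {E : Type*} [NormedAddCommGroup E] [InnerProductSpace ℝ E]

theorem exists_ne_zero_forall_inner_ne_zero [Nontrivial E] {ι : Type*} [Finite ι] (v : ι → E)
    (hv : ∀ i, v i ≠ 0) : ∃ u ≠ 0, ∀ i, ⟪u, v i⟫ ≠ 0 := by
  obtain ⟨w, hw⟩ := exists_ne (0 : E)
  -- the extra vector `w` forces `u ≠ 0`, also when `ι` is empty
  let v' : Option ι → E := fun o => o.elim w v
  obtain ⟨u, hu⟩ := Module.Dual.exists_forall_ne_zero_of_forall_exists (K := ℝ)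
    (fun o => innerₛₗ ℝ (v' o)) fun o => ⟨v' o, by cases o <;> simp [v', hw, hv]⟩
  refine ⟨u, fun h => hu none (by simp [h]), fun i => ?_⟩
  simpa [v', real_inner_comm] using hu (some i)

variable [FiniteDimensional ℝ E]

theorem exists_ne_zero_forall_inner_eq_of_finrank_vectorSpan_lt {s : Set E} {q : E}
    (hq : q ∈ s) (hs : finrank ℝ (vectorSpan ℝ s) < finrank ℝ E) :
    ∃ u ≠ 0, ∀ p ∈ s, ⟪u, p⟫ = ⟪u, q⟫ := by
  have hne : (vectorSpan ℝ s)ᗮ ≠ ⊥ := by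
    rw [Ne, Submodule.orthogonal_eq_bot_iff]
    rintro h
    rw [h, finrank_top] at hs
    exact hs.false
  obtain ⟨u, hu, hu0⟩ := (Submodule.ne_bot_iff _).mp hne
  refine ⟨u, hu0, fun p hp => ?_⟩
  have := Submodule.inner_right_of_mem_orthogonal (vsub_mem_vectorSpan ℝ hp hq) hu
  rw [real_inner_comm, vsub_eq_sub, inner_sub_right, sub_eq_zero] at this
  exact this

theorem injective_of_forall_card_eq_finrank_add_one {ι : Type*} [Fintype ι]
    (x : ι → E) (hE : 0 < finrank ℝ E) (hι : finrank ℝ E + 1 ≤ Fintype.card ι)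
    (hgp : ∀ s : Finset ι, #s = finrank ℝ E + 1 →
      ¬ ∃ (u : E) (c : ℝ), u ≠ 0 ∧ ∀ i ∈ s, ⟪u, x i⟫ = c) :
    Function.Injective x := by
  classical
  intro i j hij
  by_contra hne
  obtain ⟨s, hsub, hs⟩ := exists_superset_card_eq (s := {i, j}) (n := finrank ℝ E + 1)
    (by rw [card_pair hne]; omega) (by simpa using hι)
  have hi : i ∈ s := hsub (by simp)
  have hj : j ∈ s.erase i := mem_erase.2 ⟨Ne.symm hne, hsub (by simp)⟩
  -- `x i = x j`, so `s` has at most `finrank E` distinct images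
  have himage : (s.erase i).image x = s.image x := by
    refine (image_subset_image (erase_subset _ _)).antisymm fun p hp => ?_
    obtain ⟨k, hk, rfl⟩ := mem_image.1 hp
    by_cases hki : k = i
    · exact mem_image.2 ⟨j, hj, by rw [hki, hij]⟩
    · exact mem_image_of_mem x (mem_erase.2 ⟨hki, hk⟩)
  have hrank : finrank ℝ (vectorSpan ℝ ((s.image x : Finset E) : Set E)) < finrank ℝ E := by
    rw [← himage]
    refine lt_of_le_of_lt
      (finrank_vectorSpan_image_finset_le ℝ x (s.erase i) (n := finrank ℝ E - 1) ?_) (by omega)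
    rw [card_erase_of_mem hi, hs]
    omega
  obtain ⟨u, hu0, hu⟩ := exists_ne_zero_forall_inner_eq_of_finrank_vectorSpan_lt
    (by simpa using mem_image_of_mem x hi) hrank
  exact hgp s hs ⟨u, _, hu0, fun k hk => hu _ (by simpa using mem_image_of_mem x hk)⟩

end InnerProductSpace

theorem Finset.card_filter_le_add_card_filter_ge {ι α : Type*} [DecidableEq ι] [LinearOrder α]
    (s : Finset ι) (f : ι → α) (c : α) :
    #(s.filter (c ≤ f ·)) + #(s.filter (f · ≤ c)) = #s + #(s.filter (f · = c)) := by
  rw [← card_union_add_card_inter, ← filter_or, ← filter_and]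
  congr 2
  · exact filter_true_of_mem fun i _ => le_total _ _
  · exact filter_congr fun i _ => by rw [eq_comm, le_antisymm_iff]

theorem natCast_le_ceil_half_of_two_mul_le {k n : ℕ} (h : 2 * k ≤ n + 1) :
    (k : ℝ) ≤ ((⌈(n : ℝ) / 2⌉ : ℤ) : ℝ) := by
  have : (k : ℤ) ≤ ⌈(n : ℝ) / 2⌉ := by
    rw [Int.le_ceil_iff]
    have hR : 2 * (k : ℝ) ≤ n + 1 := by exact_mod_cast h
    push_cast
    linarith
  exact_mod_cast this

theorem sInf_halfspace_mass_le {d n : ℕ} (x : Fin n → EuclideanSpace ℝ (Fin d))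
    (y v : EuclideanSpace ℝ (Fin d)) (hv : v ≠ 0) :
    sInf {r : ℝ | ∃ H : Set (EuclideanSpace ℝ (Fin d)),
        IsClosedHalfspace H ∧ y ∈ H ∧ r = ({i : Fin n | x i ∈ H}.ncard : ℝ) / n} ≤
      (#{i | ⟪v, y⟫ ≤ ⟪v, x i⟫} : ℝ) / n := by
  have hy : y ∈ {z | ⟪v, y⟫ ≤ ⟪v, z⟫} := le_refl ⟪v, y⟫
  refine csInf_le ⟨0, fun r ⟨H, _, _, hr⟩ => hr ▸ by positivity⟩
    ⟨{z | ⟪v, y⟫ ≤ ⟪v, z⟫}, ⟨v, _, hv, rfl⟩, hy, ?_⟩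
  rw [← Set.ncard_coe_finset, coe_filter]
  simp

theorem max_depth_le_half_general_position (d n : ℕ) (hd : 0 < d) (hn : d + 1 ≤ n)
    (x : Fin n → EuclideanSpace ℝ (Fin d))
    (hgp : ∀ s : Finset (Fin n), s.card = d + 1 →
      ¬ ∃ (u : EuclideanSpace ℝ (Fin d)) (c : ℝ), u ≠ 0 ∧ ∀ i ∈ s, ⟪u, x i⟫ = c)
    (y : EuclideanSpace ℝ (Fin d)) :
    sInf {r : ℝ | ∃ H : Set (EuclideanSpace ℝ (Fin d)),
        IsClosedHalfspace H ∧ y ∈ H ∧ r = ({i : Fin n | x i ∈ H}.ncard : ℝ) / n} ≤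
      ((⌈(n : ℝ) / 2⌉ : ℤ) : ℝ) / n := by
  have hdim : finrank ℝ (EuclideanSpace ℝ (Fin d)) = d := finrank_euclideanSpace_fin
  have : Nontrivial (EuclideanSpace ℝ (Fin d)) := nontrivial_of_finrank_pos (R := ℝ) (by omega)
  have hinj := injective_of_forall_card_eq_finrank_add_one x (by omega) (by simpa [hdim])
    (by simpa only [hdim] using hgp)
  obtain ⟨u, hu0, hu⟩ := exists_ne_zero_forall_inner_ne_zero
    (fun i : {i // x i ≠ y} => x i - y) fun i => sub_ne_zero.2 i.2
  have hon : #{i | ⟪u, x i⟫ = ⟪u, y⟫} ≤ 1 := by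
    have hy : ∀ i, ⟪u, x i⟫ = ⟪u, y⟫ → x i = y := fun i hi => by
      by_contra h
      exact hu ⟨i, h⟩ (by rw [inner_sub_right, hi, sub_self])
    exact card_le_one.2 fun i hi j hj =>
      hinj ((hy i (by simpa using hi)).trans (hy j (by simpa using hj)).symm)
  have hsum := card_filter_le_add_card_filter_ge univ (fun i => ⟪u, x i⟫) ⟪u, y⟫
  rw [card_univ, Fintype.card_fin] at hsum
  rcases le_total #{i | ⟪u, y⟫ ≤ ⟪u, x i⟫} #{i | ⟪u, x i⟫ ≤ ⟪u, y⟫} with h | h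
  · refine (sInf_halfspace_mass_le x y u hu0).trans ?_
    gcongr
    exact natCast_le_ceil_half_of_two_mul_le (by omega)
  · refine (sInf_halfspace_mass_le x y (-u) (neg_ne_zero.2 hu0)).trans ?_
    simp only [inner_neg_left, neg_le_neg_iff]
    gcongr
    exact natCast_le_ceil_half_of_two_mul_le (by omega)
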